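/- (Admissible sequences converge after renormalization.) Let (β_m)_{m≥1} be real numbers with 4^m·β_m → 0 as m → ∞, and set c_m = cos 2β_m. Let m₀, n ∈ ℕ, let z_{m₀} ∈ [0,2], let (p_m) be a sequence with values in {+,−} such that p_m = − for all m > n, and define recursively z_m = S^{p_m}_{c_m}(z_{m−1}) for m > m₀. Then every z_m lies in [0,2] and the sequence (4^m·z_m) converges in ℝ. -/

import Mathlib

/-- The inverse branch `S⁺_c(w) = 1 + (1/√2)·√(1 + (1−w)c)` of the spectral decimation map. -/
noncomputable def Splus (c w : ℝ) : ℝ := 1 + (Real.sqrt 2)⁻¹ * Real.sqrt (1 + (1 - w) * c)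

/-- The inverse branch `S⁻_c(w) = 1 − (1/√2)·√(1 + (1−w)c)` of the spectral decimation map. -/
noncomputable def Sminus (c w : ℝ) : ℝ := 1 - (Real.sqrt 2)⁻¹ * Real.sqrt (1 + (1 - w) * c)

/-!
On the `−` branch one has the exact identity `4 S⁻_c(w) − w = 2 S⁻_c(w)² + (1 − w)(1 − c)`, so
`S⁻_c(w) = w/4 + O(w² + (1 − c))`. Since `1 − c_m = 2 sin² β_m = O(16⁻ᵐ)`, the bound
`S⁻_c(w) ≤ w/2 + (1 − c)/2` makes `z_m` summable, and `y_m = 4ᵐ z_m` then satisfies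
`|y_{m+1} − y_m| ≤ z_m y_m + O(4⁻ᵐ)`: a perturbation that is summable both multiplicatively and
additively. A discrete Grönwall bound keeps `y` bounded, after which its increments are summable.
-/

open Filter Topology Set Real Finset

section PerturbedRecursion

variable {y a b : ℕ → ℝ}

theorem abs_le_exp_sum_mul_of_abs_succ_sub_le (ha : ∀ n, 0 ≤ a n) (hb : ∀ n, 0 ≤ b n)
    (h : ∀ n, |y (n + 1) - y n| ≤ a n * |y n| + b n) (n : ℕ) :
    |y n| ≤ exp (∑ k ∈ range n, a k) * (|y 0| + ∑ k ∈ range n, b k) := by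
  induction n with
  | zero => simp
  | succ n ih =>
    set A := ∑ k ∈ range n, a k
    set B := ∑ k ∈ range n, b k
    have hA : 1 ≤ exp (A + a n) :=
      one_le_exp (add_nonneg (sum_nonneg fun k _ => ha k) (ha n))
    rw [sum_range_succ, sum_range_succ]
    calc |y (n + 1)| ≤ (a n + 1) * |y n| + b n := by
          linarith [h n, abs_sub_abs_le_abs_sub (y (n + 1)) (y n)]
      _ ≤ exp (a n) * (exp A * (|y 0| + B)) + b n := by
          gcongr
          exact add_one_le_exp _
      _ ≤ exp (A + a n) * (|y 0| + (B + b n)) := by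
          rw [exp_add] at hA ⊢
          nlinarith [mul_le_mul_of_nonneg_right hA (hb n)]

theorem exists_tendsto_of_abs_succ_sub_le (ha : ∀ n, 0 ≤ a n) (hb : ∀ n, 0 ≤ b n)
    (has : Summable a) (hbs : Summable b) (h : ∀ n, |y (n + 1) - y n| ≤ a n * |y n| + b n) :
    ∃ L, Tendsto y atTop (𝓝 L) := by
  obtain ⟨C, hC⟩ : ∃ C, ∀ n, |y n| ≤ C := by
    refine ⟨exp (∑' k, a k) * (|y 0| + ∑' k, b k), fun n =>
      (abs_le_exp_sum_mul_of_abs_succ_sub_le ha hb h n).trans ?_⟩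
    have hA := has.sum_le_tsum (range n) fun k _ => ha k
    have hB := hbs.sum_le_tsum (range n) fun k _ => hb k
    have hB₀ : 0 ≤ ∑ k ∈ range n, b k := sum_nonneg fun k _ => hb k
    gcongr
  have hdist (n : ℕ) : dist (y n) (y n.succ) ≤ a n * C + b n := by
    rw [dist_comm, dist_eq]
    exact (h n).trans (by gcongr; exacts [ha n, hC n])
  exact cauchySeq_tendsto_of_complete <|
    cauchySeq_of_dist_le_of_summable _ hdist ((has.mul_right C).add hbs)

end PerturbedRecursion

theorem summable_of_succ_le_mul_add {u v : ℕ → ℝ} {r : ℝ} (hr : r < 1)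
    (hu : ∀ n, 0 ≤ u n) (hv : ∀ n, 0 ≤ v n) (hvs : Summable v)
    (h : ∀ n, u (n + 1) ≤ r * u n + v n) : Summable u := by
  refine summable_of_sum_range_le hu (c := (u 0 + ∑' k, v k) / (1 - r)) fun n => ?_
  rw [le_div_iff₀ (by linarith)]
  have hstep : ∑ k ∈ range n, u (k + 1) ≤ r * ∑ k ∈ range n, u k + ∑ k ∈ range n, v k := by
    rw [mul_sum, ← sum_add_distrib]
    exact sum_le_sum fun k _ => h k
  have hshift : ∑ k ∈ range n, u k + u n = u 0 + ∑ k ∈ range n, u (k + 1) := by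
    rw [← sum_range_succ, sum_range_succ']
    ring
  have hV : ∑ k ∈ range n, v k ≤ ∑' k, v k := hvs.sum_le_tsum _ fun k _ => hv k
  nlinarith [hu n]

section Branches

variable {c w : ℝ}

theorem exists_Splus_Sminus_eq (hc : c ∈ Icc (-1 : ℝ) 1) (hw : w ∈ Icc (0 : ℝ) 2) :
    ∃ s, 0 ≤ s ∧ s ≤ 1 ∧ 2 * s ^ 2 = 1 + (1 - w) * c ∧
      Splus c w = 1 + s ∧ Sminus c w = 1 - s := by
  obtain ⟨hc₁, hc₂⟩ := hc
  obtain ⟨hw₁, hw₂⟩ := hw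
  have ha : 0 ≤ 1 + (1 - w) * c := by nlinarith
  set s := (√2)⁻¹ * √(1 + (1 - w) * c)
  have hs₀ : 0 ≤ s := by positivity
  have hsq : 2 * s ^ 2 = 1 + (1 - w) * c := by
    rw [mul_pow, inv_pow, sq_sqrt ha, sq_sqrt zero_le_two]
    field_simp
  refine ⟨s, hs₀, ?_, hsq, rfl, rfl⟩
  nlinarith

theorem Splus_mem_Icc (hc : c ∈ Icc (-1 : ℝ) 1) (hw : w ∈ Icc (0 : ℝ) 2) :
    Splus c w ∈ Icc (0 : ℝ) 2 := by
  obtain ⟨s, hs₀, hs₁, -, hs, -⟩ := exists_Splus_Sminus_eq hc hw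
  rw [hs]
  constructor <;> linarith

theorem Sminus_mem_Icc (hc : c ∈ Icc (-1 : ℝ) 1) (hw : w ∈ Icc (0 : ℝ) 2) :
    Sminus c w ∈ Icc (0 : ℝ) 2 := by
  obtain ⟨s, hs₀, hs₁, -, -, hs⟩ := exists_Splus_Sminus_eq hc hw
  rw [hs]
  constructor <;> linarith

theorem Sminus_le_half_add (hc : c ∈ Icc (-1 : ℝ) 1) (hw : w ∈ Icc (0 : ℝ) 2) :
    Sminus c w ≤ w / 2 + (1 - c) / 2 := by
  obtain ⟨s, hs₀, hs₁, hsq, -, hs⟩ := exists_Splus_Sminus_eq hc hw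
  rw [hs]
  nlinarith [mul_nonneg hw.1 (sub_nonneg.2 hc.2)]

theorem abs_four_mul_Sminus_sub_le (hc : c ∈ Icc (-1 : ℝ) 1) (hw : w ∈ Icc (0 : ℝ) 2) :
    |4 * Sminus c w - w| ≤ w ^ 2 + 3 * (1 - c) := by
  obtain ⟨s, -, -, hsq, -, hs⟩ := exists_Splus_Sminus_eq hc hw
  have hid : 4 * Sminus c w - w = 2 * Sminus c w ^ 2 + (1 - w) * (1 - c) := by
    rw [hs]
    linear_combination (-1 : ℝ) * hsq
  have hle := Sminus_le_half_add hc hw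
  have hnonneg := (Sminus_mem_Icc hc hw).1
  obtain ⟨hc₁, hc₂⟩ := hc
  obtain ⟨hw₁, hw₂⟩ := hw
  rw [hid, abs_le]
  constructor <;> nlinarith

end Branches

theorem summable_four_pow_mul_one_sub_cos {β : ℕ → ℝ} {C : ℝ} (hC : ∀ m, |4 ^ m * β m| ≤ C) :
    Summable fun m => 4 ^ m * (1 - cos (2 * β m)) := by
  refine ((summable_geometric_of_lt_one (r := 1 / 4) (by norm_num) (by norm_num)).mul_left
    (2 * C ^ 2)).of_nonneg_of_le (fun m => ?_) fun m => ?_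
  · have := cos_le_one (2 * β m)
    positivity
  · have hcos : 1 - cos (2 * β m) ≤ 2 * β m ^ 2 := by
      nlinarith [one_sub_sq_div_two_le_cos (x := 2 * β m)]
    have hsq : (4 ^ m * β m) ^ 2 ≤ C ^ 2 := by
      rw [← sq_abs]
      exact pow_le_pow_left₀ (abs_nonneg _) (hC m) 2
    calc 4 ^ m * (1 - cos (2 * β m)) ≤ 4 ^ m * (2 * β m ^ 2) := by gcongr
      _ = 2 * (4 ^ m * β m) ^ 2 * (1 / 4) ^ m := by
          have h4 : (4 : ℝ) ^ m * (1 / 4) ^ m = 1 := by rw [← mul_pow]; norm_num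
          linear_combination (-2 * 4 ^ m * β m ^ 2) * h4
      _ ≤ 2 * C ^ 2 * (1 / 4) ^ m := by gcongr

theorem exists_tendsto_four_pow_mul_of_Sminus {c w : ℕ → ℝ} (hc : ∀ k, c k ∈ Icc (-1 : ℝ) 1)
    (hcs : Summable fun k => 4 ^ k * (1 - c k)) (hw₀ : w 0 ∈ Icc (0 : ℝ) 2)
    (hrec : ∀ k, w (k + 1) = Sminus (c k) (w k)) :
    ∃ L, Tendsto (fun k => 4 ^ k * w k) atTop (𝓝 L) := by
  have hw (k : ℕ) : w k ∈ Icc (0 : ℝ) 2 := by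
    induction k with
    | zero => exact hw₀
    | succ k ih => exact hrec k ▸ Sminus_mem_Icc (hc k) ih
  have hε (k : ℕ) : 0 ≤ 1 - c k := sub_nonneg.2 (hc k).2
  have hεs : Summable fun k => 1 - c k :=
    hcs.of_nonneg_of_le hε fun k => le_mul_of_one_le_left (hε k) (one_le_pow₀ (by norm_num))
  have hws : Summable w :=
    summable_of_succ_le_mul_add (r := 1 / 2) (v := fun k => (1 - c k) / 2) (by norm_num)
      (fun k => (hw k).1) (fun k => by linarith [hε k]) (hεs.div_const 2)
      fun k => by linarith [hrec k ▸ Sminus_le_half_add (hc k) (hw k)]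
  refine exists_tendsto_of_abs_succ_sub_le (b := fun k => 3 * (4 ^ k * (1 - c k)))
    (fun k => (hw k).1) (fun k => mul_nonneg zero_le_three (mul_nonneg (by positivity) (hε k)))
    hws (hcs.mul_left 3) fun k => ?_
  have h4 : (0 : ℝ) ≤ 4 ^ k := by positivity
  calc |4 ^ (k + 1) * w (k + 1) - 4 ^ k * w k| = 4 ^ k * |4 * w (k + 1) - w k| := by
        rw [← abs_of_nonneg h4, ← abs_mul, abs_of_nonneg h4, pow_succ]
        ring_nf
    _ ≤ 4 ^ k * (w k ^ 2 + 3 * (1 - c k)) := by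
        gcongr
        rw [hrec k]
        exact abs_four_mul_Sminus_sub_le (hc k) (hw k)
    _ = w k * |4 ^ k * w k| + 3 * (4 ^ k * (1 - c k)) := by
        rw [abs_of_nonneg (mul_nonneg h4 (hw k).1)]
        ring

/-- Admissible sequences converge after renormalization: if `4^m·β_m → 0`,
`z_{m₀} ∈ [0,2]`, and `z_m = S^{p_m}_{cos 2β_m}(z_{m−1})` for `m > m₀` with branch choices
`p_m ∈ {+,−}` satisfying `p_m = −` for all `m > n`, then every `z_m` lies in `[0,2]` and
`4^m·z_m` converges. -/
theorem stmt15 (β : ℕ → ℝ)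
    (hβ : Filter.Tendsto (fun m => (4 : ℝ) ^ m * β m) Filter.atTop (nhds 0))
    (m₀ n : ℕ) (z : ℕ → ℝ) (hz0 : z m₀ ∈ Set.Icc (0 : ℝ) 2)
    (p : ℕ → Bool) (hp : ∀ m, n < m → p m = false)
    (hrec : ∀ m, m₀ < m →
        z m = if p m then Splus (Real.cos (2 * β m)) (z (m - 1))
              else Sminus (Real.cos (2 * β m)) (z (m - 1))) :
    (∀ m, m₀ ≤ m → z m ∈ Set.Icc (0 : ℝ) 2) ∧
    ∃ L : ℝ, Filter.Tendsto (fun m => (4 : ℝ) ^ m * z m) Filter.atTop (nhds L) := by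
  have hc (m : ℕ) : cos (2 * β m) ∈ Icc (-1 : ℝ) 1 := ⟨neg_one_le_cos _, cos_le_one _⟩
  have hz (m : ℕ) (hm : m₀ ≤ m) : z m ∈ Icc (0 : ℝ) 2 := by
    induction m, hm using Nat.le_induction with
    | base => exact hz0
    | succ m hm ih =>
      rw [hrec (m + 1) (by omega), Nat.add_sub_cancel]
      split
      · exact Splus_mem_Icc (hc _) ih
      · exact Sminus_mem_Icc (hc _) ih
  refine ⟨hz, ?_⟩
  obtain ⟨C, hC⟩ := hβ.abs.bddAbove_range
  have hcs := summable_four_pow_mul_one_sub_cos fun m => hC ⟨m, rfl⟩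
  set M := max m₀ n
  have hcs' : Summable fun k => 4 ^ k * (1 - cos (2 * β (k + M + 1))) := by
    refine ((summable_nat_add_iff (M + 1)).mpr hcs).of_nonneg_of_le
      (fun k => mul_nonneg (by positivity) (sub_nonneg.2 (hc _).2)) fun k => ?_
    rw [← add_assoc]
    gcongr
    · exact sub_nonneg.2 (hc _).2
    · norm_num
    · omega
  have hrec' (k : ℕ) : z (k + 1 + M) = Sminus (cos (2 * β (k + M + 1))) (z (k + M)) := by
    rw [hrec _ (by omega), hp _ (by omega), show k + 1 + M - 1 = k + M by omega, add_right_comm]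
    rfl
  obtain ⟨L, hL⟩ := exists_tendsto_four_pow_mul_of_Sminus (w := fun k => z (k + M))
    (fun k => hc _) hcs' (by simpa using hz M (le_max_left _ _)) hrec'
  refine ⟨4 ^ M * L, (tendsto_add_atTop_iff_nat M).mp ?_⟩
  convert hL.const_mul (4 ^ M) using 2 with k
  ring
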